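/- Let m ≥ 2 and b ∈ ℝ^m with σ_b > 0. The Jacobian of the batch normalization map B^{(β,γ)} at b equals (γ/σ_b)·(I_m − (1/m)·𝟏𝟏ᵀ − (1/m)·B^{(0,1)}(b)·B^{(0,1)}(b)ᵀ), and moreover the two vectors 𝟏/√m and B^{(0,1)}(b)/√m form an orthonormal set in ℝ^m, i.e., ‖B^{(0,1)}(b)‖₂² = m and ⟨𝟏, B^{(0,1)}(b)⟩ = 0. -/

import Mathlib

open scoped RealInnerProductSpace

/-- The empirical mean of the batch `b`. -/
noncomputable def bnMean (m : ℕ) (b : EuclideanSpace ℝ (Fin m)) : ℝ :=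
  (∑ i, b i) / m

/-- The empirical variance `σ_b²` of the batch `b`. -/
noncomputable def bnVar (m : ℕ) (b : EuclideanSpace ℝ (Fin m)) : ℝ :=
  (∑ i, (b i - bnMean m b) ^ 2) / m

/-- The batch normalization map `B^{(β,γ)}(b)_i = γ·(b_i − μ_b)/σ_b + β`. -/
noncomputable def bn (m : ℕ) (β γ : ℝ) (b : EuclideanSpace ℝ (Fin m)) :
    EuclideanSpace ℝ (Fin m) :=
  WithLp.toLp 2 (fun i => γ * (b i - bnMean m b) / Real.sqrt (bnVar m b) + β)

/-- The all-ones vector `𝟏 ∈ ℝ^m`. -/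
noncomputable def onesVec (m : ℕ) : EuclideanSpace ℝ (Fin m) := WithLp.toLp 2 (fun _ => 1)

/-!
With `c = b - μ_b 𝟏` the centred batch, the orthogonal projection of `b` onto `𝟏ᗮ`, one has
`σ_b = ‖c‖ / √m`, hence `B^{(β,γ)}(b) = γ √m · c / ‖c‖ + β 𝟏`. The Jacobian of `y ↦ y / ‖y‖`
at `c ≠ 0` is `‖c‖⁻¹ (I - u uᵀ)` with `u = c / ‖c‖`; composing it with the projection and
using `⟪c, 𝟏⟫ = 0` gives the formula, because `B^{(0,1)}(b) = √m u`. The same identity gives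
`‖B^{(0,1)}(b)‖ = √m` and `⟪𝟏, B^{(0,1)}(b)⟫ = 0`.
-/

section Normalize

variable {E : Type*} [NormedAddCommGroup E] [InnerProductSpace ℝ E] {x : E}

theorem hasFDerivAt_norm_of_ne_zero (hx : x ≠ 0) :
    HasFDerivAt (‖·‖) (‖x‖⁻¹ • innerSL ℝ x) x := by
  have h := (hasFDerivAt_id x).norm_sq.sqrt (by simpa using hx)
  simp only [id, Real.sqrt_sq (norm_nonneg _)] at h
  convert h using 1
  ext v
  simp only [smul_apply, coe_innerSL_apply, smul_eq_mul, one_div, mul_inv_rev,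
    ContinuousLinearMap.comp_id, nsmul_eq_mul, Nat.cast_ofNat]
  field_simp

theorem hasFDerivAt_inv_norm_smul (hx : x ≠ 0) :
    HasFDerivAt (fun y : E => ‖y‖⁻¹ • y)
      (‖x‖⁻¹ • (ContinuousLinearMap.id ℝ E - (‖x‖ ^ 2)⁻¹ • (innerSL ℝ x).smulRight x)) x := by
  have hinv := (hasDerivAt_inv (norm_ne_zero_iff.mpr hx)).comp_hasFDerivAt x
    (hasFDerivAt_norm_of_ne_zero hx)
  refine (hinv.fun_smul (hasFDerivAt_id x)).congr_fderiv ?_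
  ext v
  simp only [Function.comp_apply, neg_smul, id_eq, add_apply, smul_apply, sub_apply, neg_apply,
    ContinuousLinearMap.id_apply, ContinuousLinearMap.smulRight_apply, coe_innerSL_apply,
    smul_eq_mul]
  module

end Normalize

section BatchNorm

variable {m : ℕ}

theorem inner_onesVec (v : EuclideanSpace ℝ (Fin m)) : ⟪onesVec m, v⟫ = ∑ i, v i := by
  simp [onesVec, PiLp.inner_apply]

noncomputable def centering (m : ℕ) :
    EuclideanSpace ℝ (Fin m) →L[ℝ] EuclideanSpace ℝ (Fin m) :=
  ContinuousLinearMap.id ℝ _ - ((m : ℝ)⁻¹ • innerSL ℝ (onesVec m)).smulRight (onesVec m)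

theorem centering_apply (b : EuclideanSpace ℝ (Fin m)) :
    centering m b = b - bnMean m b • onesVec m := by
  simp [centering, inner_onesVec, bnMean, div_eq_inv_mul]

theorem centering_apply_apply (b : EuclideanSpace ℝ (Fin m)) (i : Fin m) :
    centering m b i = b i - bnMean m b := by
  simp [centering_apply, onesVec]

theorem inner_onesVec_centering (b : EuclideanSpace ℝ (Fin m)) :
    ⟪onesVec m, centering m b⟫ = 0 := by
  simp only [inner_onesVec, centering_apply_apply, Finset.sum_sub_distrib, Finset.sum_const,
    Finset.card_univ, Fintype.card_fin, nsmul_eq_mul, bnMean]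
  rcases eq_or_ne m 0 with rfl | hm
  · simp
  · field_simp
    ring

theorem inner_centering_centering (b v : EuclideanSpace ℝ (Fin m)) :
    ⟪centering m b, centering m v⟫ = ⟪centering m b, v⟫ := by
  rw [centering_apply v, inner_sub_right, inner_smul_right, real_inner_comm (onesVec m),
    inner_onesVec_centering, mul_zero, sub_zero]

theorem bnVar_eq (b : EuclideanSpace ℝ (Fin m)) : bnVar m b = ‖centering m b‖ ^ 2 / m := by
  simp [bnVar, EuclideanSpace.norm_sq_eq, centering_apply_apply]

theorem sqrt_bnVar (b : EuclideanSpace ℝ (Fin m)) :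
    Real.sqrt (bnVar m b) = ‖centering m b‖ / Real.sqrt m := by
  rw [bnVar_eq, Real.sqrt_div' _ m.cast_nonneg, Real.sqrt_sq (norm_nonneg _)]

theorem bn_eq (β γ : ℝ) : bn m β γ = fun b =>
    (γ * Real.sqrt m) • ‖centering m b‖⁻¹ • centering m b + β • onesVec m := by
  ext b i
  simp only [bn, sqrt_bnVar, div_eq_mul_inv, mul_inv_rev, inv_inv, onesVec, PiLp.add_apply,
    PiLp.smul_apply, centering_apply_apply, smul_eq_mul, mul_one, add_left_inj]
  ring

theorem hasFDerivAt_bn (β γ : ℝ) {b : EuclideanSpace ℝ (Fin m)} (hb : centering m b ≠ 0) :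
    HasFDerivAt (bn m β γ)
      ((γ * Real.sqrt m) • (‖centering m b‖⁻¹ • (ContinuousLinearMap.id ℝ _ -
        (‖centering m b‖ ^ 2)⁻¹ • (innerSL ℝ (centering m b)).smulRight (centering m b))).comp
          (centering m)) b := by
  rw [bn_eq]
  exact (((hasFDerivAt_inv_norm_smul hb).comp b (centering m).hasFDerivAt).const_smul
    (γ * Real.sqrt m)).add_const _

end BatchNorm

theorem batchnorm_jacobian_general
    (m : ℕ) (β γ : ℝ)
    (b : EuclideanSpace ℝ (Fin m)) (hσ : 0 < bnVar m b) :
    (∀ v : EuclideanSpace ℝ (Fin m),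
      fderiv ℝ (bn m β γ) b v
        = (γ / Real.sqrt (bnVar m b)) •
            (v - ((∑ i, v i) / m) • onesVec m
               - (⟪bn m 0 1 b, v⟫ / m) • bn m 0 1 b)) ∧
    ‖bn m 0 1 b‖ ^ 2 = m ∧
    ⟪onesVec m, bn m 0 1 b⟫ = 0 := by
  have hm : (m : ℝ) ≠ 0 := by
    rintro h
    simp [bnVar, h] at hσ
  have hc : centering m b ≠ 0 := by
    rintro h
    simp [bnVar_eq, h] at hσ
  have hbn : bn m 0 1 b = (Real.sqrt m * ‖centering m b‖⁻¹) • centering m b := by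
    simp [bn_eq, smul_smul]
  refine ⟨fun v => ?_, ?_, ?_⟩
  · rw [(hasFDerivAt_bn β γ hc).fderiv, sqrt_bnVar, hbn]
    simp only [ContinuousLinearMap.smul_comp, ContinuousLinearMap.sub_comp,
      ContinuousLinearMap.id_comp, ContinuousLinearMap.comp_apply, smul_apply, sub_apply,
      ContinuousLinearMap.smulRight_apply, coe_innerSL_apply, inner_centering_centering,
      real_inner_smul_left]
    rw [centering_apply v, bnMean]
    match_scalars <;> field_simp
    rw [Real.sq_sqrt m.cast_nonneg]
    ring
  · rw [hbn, norm_smul, Real.norm_of_nonneg (by positivity), mul_assoc,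
      inv_mul_cancel₀ (norm_ne_zero_iff.2 hc), mul_one, Real.sq_sqrt m.cast_nonneg]
  · rw [hbn, inner_smul_right, inner_onesVec_centering, mul_zero]

/-- The Jacobian of batch normalization at `b` equals
`(γ/σ_b)·(I_m − (1/m)·𝟏𝟏ᵀ − (1/m)·B^{(0,1)}(b)·B^{(0,1)}(b)ᵀ)`, and the vectors
`𝟏/√m` and `B^{(0,1)}(b)/√m` form an orthonormal set. -/
theorem batchnorm_jacobian
    (m : ℕ) (hm : 2 ≤ m) (β γ : ℝ)
    (b : EuclideanSpace ℝ (Fin m)) (hσ : 0 < bnVar m b) :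
    (∀ v : EuclideanSpace ℝ (Fin m),
      fderiv ℝ (bn m β γ) b v
        = (γ / Real.sqrt (bnVar m b)) •
            (v - ((∑ i, v i) / m) • onesVec m
               - (⟪bn m 0 1 b, v⟫ / m) • bn m 0 1 b)) ∧
    ‖bn m 0 1 b‖ ^ 2 = m ∧
    ⟪onesVec m, bn m 0 1 b⟫ = 0 :=
  batchnorm_jacobian_general m β γ b hσ
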